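/- arXiv:2106.13221 — 3 statements merged into one kernel-verified Lean document; each statement's English description precedes it below -/
import Mathlib

section
/- Let h:[0,∞)→(0,∞) satisfy h(y) ≥ c·y·log(y) for all y ≥ e, for some c>0, and let H(x) = ∫₀^x dy/h(y) with H diverging at infinity. Then for every t>0, H⁻¹(H(y)+t) ≥ y^{e^{ct}} for all sufficiently large y, and consequently lim_{y→∞} H⁻¹(H(y)+t)/y = +∞. -/
/-!
Since `d/dx log (log x) = (x log x)⁻¹`, the bound `h y ≥ c y log y` gives
`H (y ^ p) - H y ≤ c⁻¹ (log log (y ^ p) - log log y) = c⁻¹ log p` for `y ≥ e`, and this equals `t`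
exactly when `p = exp (c t)`. As `H` is strictly increasing, `y ^ p ≤ H⁻¹ (H y + t)`, and then
`H⁻¹ (H y + t) / y ≥ y ^ (p - 1) → ∞`.
-/

open Real Filter Set MeasureTheory intervalIntegral

theorem integral_inv_mul_log {a b : ℝ} (ha : 1 < a) (hab : a ≤ b) :
    ∫ x in a..b, (x * log x)⁻¹ = log (log b) - log (log a) := by
  have hgt : ∀ x ∈ uIcc a b, 1 < x := fun x hx => ha.trans_le (uIcc_of_le hab ▸ hx).1
  apply integral_eq_sub_of_hasDerivAt
  · intro x hx
    have hx := hgt x hx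
    have hd := (hasDerivAt_log (by linarith)).log (log_pos hx).ne'
    rwa [div_eq_mul_inv, ← mul_inv] at hd
  · refine ContinuousOn.intervalIntegrable fun x hx => ?_
    have hx := hgt x hx
    exact ((continuousAt_id.mul (continuousAt_log (by linarith))).inv₀
      (mul_pos (zero_lt_one.trans hx) (log_pos hx)).ne').continuousWithinAt

theorem integral_inv_mul_log_rpow {y p : ℝ} (hy : 1 < y) (hp : 1 ≤ p) :
    ∫ x in y..y ^ p, (x * log x)⁻¹ = log p := by
  rw [integral_inv_mul_log hy (self_le_rpow_of_one_le hy.le hp), log_rpow (by positivity),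
    log_mul (by positivity) (log_pos hy).ne']
  ring

theorem integral_le_of_le_inv_mul_mul_log {f : ℝ → ℝ} {c t y : ℝ} (hc : 0 < c) (ht : 0 ≤ t)
    (hy : 1 < y) (hf : IntervalIntegrable f volume y (y ^ exp (c * t)))
    (hle : ∀ x ∈ Icc y (y ^ exp (c * t)), f x ≤ (c * x * log x)⁻¹) :
    ∫ x in y..y ^ exp (c * t), f x ≤ t := by
  have hp : 1 ≤ exp (c * t) := one_le_exp (by positivity)
  have hyp : y ≤ y ^ exp (c * t) := self_le_rpow_of_one_le hy.le hp
  have hrhs : ∫ x in y..y ^ exp (c * t), (c * x * log x)⁻¹ = t := by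
    simp_rw [mul_assoc, mul_inv c]
    rw [intervalIntegral.integral_const_mul, integral_inv_mul_log_rpow hy hp, log_exp]
    field_simp
  have hint : IntervalIntegrable (fun x => (c * x * log x)⁻¹) volume y (y ^ exp (c * t)) := by
    refine ContinuousOn.intervalIntegrable fun x hx => ?_
    have hx : 1 < x := hy.trans_le (uIcc_of_le hyp ▸ hx).1
    exact ((continuousAt_const.mul continuousAt_id).mul (continuousAt_log (by linarith))).inv₀
      (mul_pos (mul_pos hc (zero_lt_one.trans hx)) (log_pos hx)).ne' |>.continuousWithinAt
  exact (integral_mono_on hyp hf hint hle).trans_eq hrhs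

section Primitive

variable {f : ℝ → ℝ} (hf : ContinuousOn f (Ici 0))
include hf

theorem intervalIntegrable_of_continuousOn_Ici {a b : ℝ} (ha : 0 ≤ a) (hb : 0 ≤ b) :
    IntervalIntegrable f volume a b :=
  (hf.mono (ordConnected_Ici.uIcc_subset ha hb)).intervalIntegrable

theorem strictMonoOn_integral_of_pos (hpos : ∀ x, 0 ≤ x → 0 < f x) :
    StrictMonoOn (fun x => ∫ y in 0..x, f y) (Ici 0) := by
  intro a ha b hb hab
  have hsub := integral_interval_sub_left (intervalIntegrable_of_continuousOn_Ici hf le_rfl hb)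
    (intervalIntegrable_of_continuousOn_Ici hf le_rfl ha)
  have hpos_ab : 0 < ∫ y in a..b, f y :=
    intervalIntegral_pos_of_pos_on (intervalIntegrable_of_continuousOn_Ici hf ha hb)
      (fun x hx => hpos x (le_trans ha hx.1.le)) hab
  dsimp only
  linarith

theorem integral_rpow_exp_sub_integral_le {c t y : ℝ} (hc : 0 < c) (ht : 0 ≤ t) (hy : 1 < y)
    (hle : ∀ x, y ≤ x → f x ≤ (c * x * log x)⁻¹) :
    (∫ x in 0..y ^ exp (c * t), f x) - ∫ x in 0..y, f x ≤ t := by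
  have hy0 : 0 ≤ y := zero_le_one.trans hy.le
  have hyp : 0 ≤ y ^ exp (c * t) := by positivity
  rw [integral_interval_sub_left (intervalIntegrable_of_continuousOn_Ici hf le_rfl hyp)
    (intervalIntegrable_of_continuousOn_Ici hf le_rfl hy0)]
  exact integral_le_of_le_inv_mul_mul_log hc ht hy
    (intervalIntegrable_of_continuousOn_Ici hf hy0 hyp) fun x hx => hle x hx.1

end Primitive

theorem osgood_inverse_growth_general
    (h : ℝ → ℝ) (hcont : Continuous h)
    (hpos : ∀ x : ℝ, 0 ≤ x → 0 < h x)
    (c : ℝ) (hc : 0 < c)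
    (hlog : ∀ y : ℝ, Real.exp 1 ≤ y → c * y * Real.log y ≤ h y)
    (H : ℝ → ℝ) (hH : ∀ x : ℝ, H x = ∫ y in (0:ℝ)..x, 1 / h y)
    (HInv : ℝ → ℝ)
    (hright : ∀ z : ℝ, 0 ≤ z → H (HInv z) = z ∧ 0 ≤ HInv z) :
    ∀ t : ℝ, 0 < t →
      (∀ᶠ y in atTop, y ^ (Real.exp (c * t)) ≤ HInv (H y + t))
      ∧ Tendsto (fun y => HInv (H y + t) / y) atTop atTop := by
  intro t ht
  have hf : ContinuousOn (fun y => 1 / h y) (Ici 0) :=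
    continuousOn_const.div hcont.continuousOn fun x hx => (hpos x hx).ne'
  have hHmono : StrictMonoOn H (Ici 0) := funext hH ▸
    strictMonoOn_integral_of_pos hf fun x hx => one_div_pos.mpr (hpos x hx)
  have hgrowth : ∀ y, exp 1 ≤ y → y ^ exp (c * t) ≤ HInv (H y + t) := by
    intro y hy
    have hy1 : 1 < y := (one_lt_exp_iff.mpr one_pos).trans_le hy
    have hstep : H (y ^ exp (c * t)) - H y ≤ t := by
      rw [hH, hH]
      refine integral_rpow_exp_sub_integral_le hf hc ht.le hy1 fun x hx => ?_
      rw [one_div]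
      exact inv_anti₀ (mul_pos (mul_pos hc (by linarith)) (log_pos (hy1.trans_le hx)))
        (hlog x (hy.trans hx))
    have hHy : 0 ≤ H y := by
      simpa [hH 0] using hHmono.monotoneOn self_mem_Ici (mem_Ici.mpr (by linarith)) (by linarith)
    obtain ⟨hHInv, hHInv_nonneg⟩ := hright (H y + t) (by positivity)
    exact (hHmono.le_iff_le (mem_Ici.mpr (by positivity)) hHInv_nonneg).mp (by linarith)
  refine ⟨eventually_ge_atTop (exp 1) |>.mono hgrowth, ?_⟩
  have hp : 0 < exp (c * t) - 1 := sub_pos.mpr (one_lt_exp_iff.mpr (by positivity))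
  refine tendsto_atTop_mono' atTop ?_ (tendsto_rpow_atTop hp)
  filter_upwards [eventually_ge_atTop (exp 1)] with y hy
  rw [rpow_sub_one ((exp_pos 1).trans_le hy).ne']
  exact div_le_div_of_nonneg_right (hgrowth y hy) ((exp_pos 1).le.trans hy)

theorem osgood_inverse_growth
    (h : ℝ → ℝ) (hcont : Continuous h) (hmono : Monotone h)
    (hpos : ∀ x : ℝ, 0 ≤ x → 0 < h x)
    (c : ℝ) (hc : 0 < c)
    (hlog : ∀ y : ℝ, Real.exp 1 ≤ y → c * y * Real.log y ≤ h y)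
    (H : ℝ → ℝ) (hH : ∀ x : ℝ, H x = ∫ y in (0:ℝ)..x, 1 / h y)
    (hdiv : Tendsto H atTop atTop)
    (HInv : ℝ → ℝ)
    (hleft : ∀ x : ℝ, 0 ≤ x → HInv (H x) = x)
    (hright : ∀ z : ℝ, 0 ≤ z → H (HInv z) = z ∧ 0 ≤ HInv z) :
    ∀ t : ℝ, 0 < t →
      (∀ᶠ y in atTop, y ^ (Real.exp (c * t)) ≤ HInv (H y + t))
      ∧ Tendsto (fun y => HInv (H y + t) / y) atTop atTop :=
  osgood_inverse_growth_general h hcont hpos c hc hlog H hH HInv hright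
end

section
/- With Hₙ(x) = Lₙ(x + Eₙ(1)) − 1 (iterated logarithm), the function ϑₙ(t,x) := Hₙ⁻¹(Hₙ(x)+t) equals Eₙ(Lₙ(x + Eₙ(1)) + t) − Eₙ(1), and for each fixed t>0 and n ≥ 2 there exists R_t > 0 such that ϑₙ(t,x) ≤ exp(x + Eₙ(1)) for all x > R_t. -/
open Real

/-- `Hₙ(x) = Lₙ(x + Eₙ(1)) − 1`. -/
noncomputable def Hn (n : ℕ) (x : ℝ) : ℝ := Real.log^[n] (x + Real.exp^[n] 1) - 1

/-- `ϑₙ(t,x) = Eₙ(Lₙ(x + Eₙ(1)) + t) − Eₙ(1)`. -/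
noncomputable def thetaN (n : ℕ) (t x : ℝ) : ℝ :=
  Real.exp^[n] (Real.log^[n] (x + Real.exp^[n] 1) + t) - Real.exp^[n] 1

lemma logiter_expiter (m : ℕ) (a : ℝ) : Real.log^[m] (Real.exp^[m] a) = a := by
  induction m generalizing a with
  | zero => simp
  | succ k ih =>
      rw [Function.iterate_succ_apply' Real.exp, Function.iterate_succ_apply Real.log,
        Real.log_exp, ih]

lemma one_le_expiter (m : ℕ) : (1:ℝ) ≤ Real.exp^[m] 1 := by
  induction m with
  | zero => simp
  | succ k ih =>
      rw [Function.iterate_succ_apply' Real.exp]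
      exact Real.one_le_exp (by linarith)

lemma expiter_logiter (m : ℕ) (y : ℝ) (h : Real.exp^[m] 1 ≤ y) :
    Real.exp^[m] (Real.log^[m] y) = y := by
  induction m generalizing y with
  | zero => simp
  | succ k ih =>
      rw [Function.iterate_succ_apply' Real.exp] at h
      have hy : 0 < y := lt_of_lt_of_le (Real.exp_pos _) h
      have hlog : Real.exp^[k] 1 ≤ Real.log y := (Real.le_log_iff_exp_le hy).mpr h
      rw [Function.iterate_succ_apply Real.log, Function.iterate_succ_apply' Real.exp,
        ih _ hlog, Real.exp_log hy]

lemma le_logiter (m : ℕ) (c y : ℝ) (hc : 0 ≤ c) (h : Real.exp^[m] c ≤ y) :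
    c ≤ Real.log^[m] y := by
  induction m generalizing c y with
  | zero => simpa using h
  | succ k ih =>
      rw [Function.iterate_succ_apply Real.exp] at h
      have h1 : Real.exp c ≤ Real.log^[k] y := ih _ _ (Real.exp_pos c).le h
      have hpos : (0:ℝ) < Real.log^[k] y := lt_of_lt_of_le (Real.exp_pos c) h1
      rw [Function.iterate_succ_apply' Real.log]
      exact (Real.le_log_iff_exp_le hpos).mpr h1

lemma log_le_half (z : ℝ) (hz : 0 < z) : Real.log z ≤ z / 2 := by
  have hs : 0 < Real.sqrt z := Real.sqrt_pos.mpr hz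
  have h1 : Real.log (Real.sqrt z) ≤ Real.sqrt z - 1 := Real.log_le_sub_one_of_pos hs
  have h2 : Real.log (Real.sqrt z) = Real.log z / 2 := Real.log_sqrt hz.le
  have h3 : Real.sqrt z ^ 2 = z := Real.sq_sqrt hz.le
  nlinarith [sq_nonneg (Real.sqrt z - 2)]

lemma expiter_mono (m : ℕ) : Monotone (Real.exp^[m]) :=
  Real.exp_monotone.iterate m

theorem thetaN_inverse_and_growth (n : ℕ) (hn : 2 ≤ n) (t : ℝ) (ht : 0 < t) :
    (∀ x : ℝ, 0 ≤ x → Hn n (thetaN n t x) = Hn n x + t)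
    ∧ ∃ R > (0:ℝ), ∀ x : ℝ, R < x →
        thetaN n t x ≤ Real.exp (x + Real.exp^[n] 1) := by
  constructor
  · intro x _
    simp only [Hn, thetaN, sub_add_cancel, logiter_expiter]
    ring
  · obtain ⟨m, rfl⟩ : ∃ m, n = m + 1 := ⟨n - 1, by omega⟩
    refine ⟨Real.exp^[m] (2 * t + 1), ?_, ?_⟩
    · calc (0:ℝ) < Real.exp^[m] 1 := lt_of_lt_of_le one_pos (one_le_expiter m)
        _ ≤ Real.exp^[m] (2 * t + 1) := expiter_mono m (by linarith)
    · intro x hx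
      set y := x + Real.exp^[m+1] 1 with hy
      have hE : (1:ℝ) ≤ Real.exp^[m+1] 1 := one_le_expiter (m+1)
      have hyR : Real.exp^[m] (2 * t + 1) ≤ y := by
        have : (0:ℝ) < Real.exp^[m+1] 1 := lt_of_lt_of_le one_pos hE
        linarith
      set z := Real.log^[m] y with hz
      have hzge : 2 * t + 1 ≤ z := le_logiter m _ y (by linarith) hyR
      have hzpos : 0 < z := by linarith
      have hlogz : Real.log z + t ≤ z := by
        have := log_le_half z hzpos
        linarith
      -- y ≥ exp^[m] 1
      have hy1 : Real.exp^[m] 1 ≤ y :=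
        le_trans (expiter_mono m (by linarith : (1:ℝ) ≤ 2 * t + 1)) hyR
      have hexpz : Real.exp^[m] z = y := expiter_logiter m y hy1
      have key : Real.exp^[m] (Real.log^[m+1] y + t) ≤ y := by
        rw [Function.iterate_succ_apply' Real.log, ← hz]
        calc Real.exp^[m] (Real.log z + t) ≤ Real.exp^[m] z := expiter_mono m hlogz
          _ = y := hexpz
      have key2 : Real.exp^[m+1] (Real.log^[m+1] y + t) ≤ Real.exp y := by
        rw [Function.iterate_succ_apply' Real.exp]
        exact Real.exp_le_exp.mpr key
      have hEpos : (0:ℝ) < Real.exp^[m+1] 1 := lt_of_lt_of_le one_pos hE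
      simp only [thetaN, ← hy]
      linarith
end

section
/- Let ν₂ ∈ (0,2), K>0, and define the operator 𝒜φ(x) = ½Δ(φρ)(x)/ρ(x) − ν₂²(K+|x|²)^{ν₂−1}φ(x) where ρ(x) = exp((K+|x|²)^{ν₂/2}). Then for any twice continuously differentiable φ:ℝᵈ→ℝ with compact support, ∫_{ℝᵈ} 𝒜φ(x)·φ(x)dx ≤ −½∫_{ℝᵈ}|∇φ(x)|²dx ≤ 0; that is, 𝒜 is dissipative on such functions. -/
open Real MeasureTheory

/-- Partial derivative in the `i`-th coordinate direction. -/
noncomputable def pderiv' {d : ℕ} (f : EuclideanSpace ℝ (Fin d) → ℝ)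
    (x : EuclideanSpace ℝ (Fin d)) (i : Fin d) : ℝ :=
  fderiv ℝ f x (EuclideanSpace.single i 1)

/-- Laplacian: sum of second partial derivatives. -/
noncomputable def laplacian' {d : ℕ} (f : EuclideanSpace ℝ (Fin d) → ℝ)
    (x : EuclideanSpace ℝ (Fin d)) : ℝ :=
  ∑ i : Fin d, fderiv ℝ (fun y => pderiv' f y i) x (EuclideanSpace.single i 1)

/-!
Write `ρ = e^F` with `F x = (K + ‖x‖²)^(ν₂/2)`. Green's identity for `φ e^{-F}` and `φ e^F`, whose
partial derivatives are `e^{∓F} (∂ᵢφ ∓ φ ∂ᵢF)`, gives `∫ φ e^{-F} Δ(φ e^F) = ∫ φ² |∇F|² - ∫ |∇φ|²`.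
Hence `∫ 𝒜φ · φ = -½ ∫ |∇φ|² + ∫ φ² (½ |∇F|² - ν₂² (K + ‖x‖²)^(ν₂-1))`, and the last integrand is
nonpositive since `|∇F|² = ν₂² (K + ‖x‖²)^(ν₂-2) ‖x‖² ≤ ν₂² (K + ‖x‖²)^(ν₂-1)`.
-/

section

variable {d : ℕ} {f g F : EuclideanSpace ℝ (Fin d) → ℝ} {x : EuclideanSpace ℝ (Fin d)}

theorem contDiff_pderiv' {n : WithTop ℕ∞} (hf : ContDiff ℝ (n + 1) f) (i : Fin d) :
    ContDiff ℝ n (fun x => pderiv' f x i) :=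
  (hf.fderiv_right le_rfl).clm_apply contDiff_const

theorem continuous_laplacian' (hf : ContDiff ℝ 2 f) : Continuous (laplacian' f) :=
  continuous_finsetSum _ fun i _ =>
    (contDiff_pderiv' (n := 0) (contDiff_pderiv' (n := 1) hf i) i).continuous

theorem pderiv'_mul (hf : DifferentiableAt ℝ f x) (hg : DifferentiableAt ℝ g x) (i : Fin d) :
    pderiv' (fun y => f y * g y) x i = f x * pderiv' g x i + g x * pderiv' f x i := by
  simp [pderiv', fderiv_fun_mul hf hg]

theorem pderiv'_exp (hF : DifferentiableAt ℝ F x) (i : Fin d) :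
    pderiv' (fun y => exp (F y)) x i = exp (F x) * pderiv' F x i := by
  simp [pderiv', fderiv_exp hF]

theorem pderiv'_const_mul (hF : DifferentiableAt ℝ F x) (c : ℝ) (i : Fin d) :
    pderiv' (fun y => c * F y) x i = c * pderiv' F x i := by
  simp [pderiv', fderiv_const_mul hF]

theorem Continuous.integrable_mul_of_hasCompactSupport {X : Type*} [TopologicalSpace X]
    [MeasurableSpace X] [OpensMeasurableSpace X] {μ : Measure X} [IsFiniteMeasureOnCompacts μ]
    {u v : X → ℝ} (hu : Continuous u) (huc : HasCompactSupport u) (hv : Continuous v) :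
    Integrable (fun x => u x * v x) μ :=
  (hu.mul hv).integrable_of_hasCompactSupport huc.mul_right

theorem Continuous.integrable_sq_mul_of_hasCompactSupport {X : Type*} [TopologicalSpace X]
    [MeasurableSpace X] [OpensMeasurableSpace X] {μ : Measure X} [IsFiniteMeasureOnCompacts μ]
    {u v : X → ℝ} (hu : Continuous u) (huc : HasCompactSupport u) (hv : Continuous v) :
    Integrable (fun x => u x ^ 2 * v x) μ := by
  simpa only [← mul_assoc, ← sq] using
    hu.integrable_mul_of_hasCompactSupport (μ := μ) huc (v := fun x => u x * v x) (hu.mul hv)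

theorem integral_mul_pderiv' (hf : ContDiff ℝ 1 f) (hfc : HasCompactSupport f)
    (hg : ContDiff ℝ 1 g) (i : Fin d) :
    ∫ x, f x * pderiv' g x i = -∫ x, pderiv' f x i * g x := by
  have hf' : Continuous (fun x => pderiv' f x i) := (contDiff_pderiv' (n := 0) hf i).continuous
  have hg' : Continuous (fun x => pderiv' g x i) := (contDiff_pderiv' (n := 0) hg i).continuous
  exact integral_mul_fderiv_eq_neg_fderiv_mul_of_integrable
    (hf'.integrable_mul_of_hasCompactSupport (hfc.fderiv_apply ℝ _) hg.continuous)
    (hf.continuous.integrable_mul_of_hasCompactSupport hfc hg')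
    (hf.continuous.integrable_mul_of_hasCompactSupport hfc hg.continuous)
    (fun x _ => hf.differentiable one_ne_zero x) (fun x _ => hg.differentiable one_ne_zero x)

theorem integral_mul_laplacian' (hf : ContDiff ℝ 1 f) (hfc : HasCompactSupport f)
    (hg : ContDiff ℝ 2 g) :
    ∫ x, f x * laplacian' g x = -∫ x, ∑ i, pderiv' f x i * pderiv' g x i := by
  have hg' (i : Fin d) : ContDiff ℝ 1 (fun x => pderiv' g x i) := contDiff_pderiv' hg i
  simp only [laplacian', Finset.mul_sum]
  rw [integral_finsetSum, integral_finsetSum, ← Finset.sum_neg_distrib]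
  · exact Finset.sum_congr rfl fun i _ => integral_mul_pderiv' hf hfc (hg' i) i
  · exact fun i _ => (contDiff_pderiv' (n := 0) hf i).continuous
      |>.integrable_mul_of_hasCompactSupport (hfc.fderiv_apply ℝ _) (hg' i).continuous
  · exact fun i _ => hf.continuous.integrable_mul_of_hasCompactSupport hfc
      (contDiff_pderiv' (n := 0) (hg' i) i).continuous

theorem integral_mul_laplacian'_mul_exp_div_exp {φ : EuclideanSpace ℝ (Fin d) → ℝ}
    (hφ : ContDiff ℝ 2 φ) (hφc : HasCompactSupport φ) (hF : ContDiff ℝ 2 F) :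
    ∫ x, φ x * (laplacian' (fun y => φ y * exp (F y)) x / exp (F x))
      = (∫ x, φ x ^ 2 * ∑ i, pderiv' F x i ^ 2) - ∫ x, ∑ i, pderiv' φ x i ^ 2 := by
  have hφd : Differentiable ℝ φ := hφ.differentiable two_ne_zero
  have hFd : Differentiable ℝ F := hF.differentiable two_ne_zero
  have hexp (s : ℝ) : ContDiff ℝ 2 (fun y => exp (s * F y)) :=
    contDiff_exp.comp (contDiff_const.mul hF)
  have hpderiv (s : ℝ) (x) (i : Fin d) :
      pderiv' (fun y => φ y * exp (s * F y)) x i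
        = exp (s * F x) * (pderiv' φ x i + s * φ x * pderiv' F x i) := by
    rw [pderiv'_mul (hφd x) ((hexp s).differentiable two_ne_zero x),
      pderiv'_exp ((hFd x).const_mul s), pderiv'_const_mul (hFd x)]
    ring
  have hφ' (i : Fin d) : Continuous (fun x => pderiv' φ x i) :=
    (contDiff_pderiv' (n := 1) hφ i).continuous
  have hF' (i : Fin d) : Continuous (fun x => pderiv' F x i) :=
    (contDiff_pderiv' (n := 1) hF i).continuous
  calc ∫ x, φ x * (laplacian' (fun y => φ y * exp (F y)) x / exp (F x))
      = ∫ x, φ x * exp (-1 * F x) * laplacian' (fun y => φ y * exp (1 * F y)) x := by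
        simp only [one_mul, neg_one_mul, exp_neg, div_eq_mul_inv]
        congr with x
        ring
    _ = -∫ x, ∑ i, pderiv' (fun y => φ y * exp (-1 * F y)) x i
          * pderiv' (fun y => φ y * exp (1 * F y)) x i :=
        integral_mul_laplacian' (hφ.mul (hexp _)).of_succ hφc.mul_right (hφ.mul (hexp _))
    _ = ∫ x, (φ x ^ 2 * ∑ i, pderiv' F x i ^ 2 - ∑ i, pderiv' φ x i ^ 2) := by
        rw [← integral_neg]
        congr with x
        simp only [hpderiv, Finset.mul_sum, ← Finset.sum_sub_distrib, ← Finset.sum_neg_distrib]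
        refine Finset.sum_congr rfl fun i _ => ?_
        have : exp (-1 * F x) * exp (1 * F x) = 1 := by rw [← exp_add]; simp
        linear_combination (φ x ^ 2 * pderiv' F x i ^ 2 - pderiv' φ x i ^ 2) * this
    _ = _ := by
        refine integral_sub ?_ (integrable_finsetSum _ fun i _ => ?_)
        · exact hφd.continuous.integrable_sq_mul_of_hasCompactSupport hφc
            (continuous_finsetSum _ fun i _ => (hF' i).pow 2)
        · simpa only [sq] using
            (hφ' i).integrable_mul_of_hasCompactSupport (hφc.fderiv_apply ℝ _) (hφ' i)

theorem pderiv'_rpow_const_add_norm_sq {K : ℝ} (hK : 0 < K) (s : ℝ)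
    (x : EuclideanSpace ℝ (Fin d)) (i : Fin d) :
    pderiv' (fun x => (K + ‖x‖ ^ 2) ^ s) x i = 2 * s * (K + ‖x‖ ^ 2) ^ (s - 1) * x i := by
  have hq : K + ‖x‖ ^ 2 ≠ 0 := by positivity
  have h : HasFDerivAt (fun x => (K + ‖x‖ ^ 2) ^ s)
      ((s * (K + ‖x‖ ^ 2) ^ (s - 1)) • (2 • innerSL ℝ x)) x := by
    simpa using ((hasFDerivAt_id x).norm_sq.const_add K).rpow_const (p := s) (Or.inl hq)
  simp only [pderiv', h.fderiv]
  simp only [smul_apply, coe_innerSL_apply, EuclideanSpace.inner_single_right, ringHom_apply,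
    one_mul, nsmul_eq_mul, Nat.cast_ofNat, smul_eq_mul]
  ring

theorem sum_pderiv'_rpow_const_add_norm_sq_sq_le {K : ℝ} (hK : 0 < K) (ν : ℝ)
    (x : EuclideanSpace ℝ (Fin d)) :
    ∑ i, pderiv' (fun x => (K + ‖x‖ ^ 2) ^ (ν / 2)) x i ^ 2
      ≤ ν ^ 2 * (K + ‖x‖ ^ 2) ^ (ν - 1) := by
  simp only [pderiv'_rpow_const_add_norm_sq hK]
  have hq : 0 < K + ‖x‖ ^ 2 := by positivity
  have hpow : ((K + ‖x‖ ^ 2) ^ (ν / 2 - 1)) ^ 2 = (K + ‖x‖ ^ 2) ^ (ν - 2) := by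
    rw [← rpow_natCast, ← rpow_mul hq.le]
    congr 1
    push_cast
    ring
  calc ∑ i, (2 * (ν / 2) * (K + ‖x‖ ^ 2) ^ (ν / 2 - 1) * x i) ^ 2
      = ν ^ 2 * (K + ‖x‖ ^ 2) ^ (ν - 2) * ∑ i, x i ^ 2 := by
        rw [Finset.mul_sum, ← hpow]
        refine Finset.sum_congr rfl fun i _ => ?_
        ring
    _ ≤ ν ^ 2 * (K + ‖x‖ ^ 2) ^ (ν - 2) * (K + ‖x‖ ^ 2) := by
        rw [← EuclideanSpace.real_norm_sq_eq]; gcongr; linarith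
    _ = ν ^ 2 * (K + ‖x‖ ^ 2) ^ (ν - 1) := by
        rw [mul_assoc, ← rpow_add_one hq.ne']
        congr 2
        ring

end

theorem operator_A_dissipative_general
    (d : ℕ) (ν₂ K : ℝ) (hK : 0 < K)
    (φ : EuclideanSpace ℝ (Fin d) → ℝ)
    (hφ : ContDiff ℝ 2 φ) (hφc : HasCompactSupport φ) :
    let ρ : EuclideanSpace ℝ (Fin d) → ℝ :=
      fun x => Real.exp ((K + ‖x‖ ^ 2) ^ (ν₂ / 2))
    let A : EuclideanSpace ℝ (Fin d) → ℝ :=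
      fun x => (1 / 2) * laplacian' (fun y => φ y * ρ y) x / ρ x
        - ν₂ ^ 2 * (K + ‖x‖ ^ 2) ^ (ν₂ - 1) * φ x
    (∫ x, A x * φ x)
      ≤ -(1 / 2) * ∫ x, ∑ i : Fin d, (pderiv' φ x i) ^ 2
    ∧ (∫ x, A x * φ x) ≤ 0 := by
  intro ρ A
  set F : EuclideanSpace ℝ (Fin d) → ℝ := fun x => (K + ‖x‖ ^ 2) ^ (ν₂ / 2)
  set V : EuclideanSpace ℝ (Fin d) → ℝ := fun x => ν₂ ^ 2 * (K + ‖x‖ ^ 2) ^ (ν₂ - 1)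
  have hq : Continuous fun x : EuclideanSpace ℝ (Fin d) => K + ‖x‖ ^ 2 := by fun_prop
  have hF : ContDiff ℝ 2 F :=
    (contDiff_const.add (contDiff_norm_sq ℝ)).rpow_const_of_ne fun x => by positivity
  have hV : Continuous V := continuous_const.mul (hq.rpow_const fun x => Or.inl (by positivity))
  have hLφ : Integrable fun x => φ x * (laplacian' (fun y => φ y * exp (F y)) x / exp (F x)) :=
    hφ.continuous.integrable_mul_of_hasCompactSupport hφc
      ((continuous_laplacian' (hφ.mul (contDiff_exp.comp hF))).div (by fun_prop)
        fun x => by positivity)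
  have hVφ : Integrable fun x => φ x ^ 2 * V x :=
    hφ.continuous.integrable_sq_mul_of_hasCompactSupport hφc hV
  have hsplit : ∫ x, A x * φ x = 1 / 2 * ((∫ x, φ x ^ 2 * ∑ i, pderiv' F x i ^ 2)
      - ∫ x, ∑ i, pderiv' φ x i ^ 2) - ∫ x, φ x ^ 2 * V x := by
    rw [← integral_mul_laplacian'_mul_exp_div_exp hφ hφc hF, ← integral_const_mul,
      ← integral_sub (hLφ.const_mul _) hVφ]
    congr with x
    simp only [A, ρ, F, V]
    ring
  have hbound : ∫ x, φ x ^ 2 * ∑ i, pderiv' F x i ^ 2 ≤ ∫ x, φ x ^ 2 * V x :=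
    integral_mono (hφ.continuous.integrable_sq_mul_of_hasCompactSupport hφc
      (continuous_finsetSum _ fun i _ => ((contDiff_pderiv' (n := 1) hF i).continuous.pow 2)))
      hVφ fun x => mul_le_mul_of_nonneg_left
        (sum_pderiv'_rpow_const_add_norm_sq_sq_le hK ν₂ x) (sq_nonneg _)
  have hVφ_nonneg : 0 ≤ ∫ x, φ x ^ 2 * V x :=
    integral_nonneg fun x => mul_nonneg (sq_nonneg _) (by positivity)
  have hgrad_nonneg : 0 ≤ ∫ x, ∑ i, pderiv' φ x i ^ 2 :=
    integral_nonneg fun x => Finset.sum_nonneg fun i _ => sq_nonneg _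
  constructor <;> linarith

theorem operator_A_dissipative
    (d : ℕ) (ν₂ K : ℝ) (hν : ν₂ ∈ Set.Ioo (0:ℝ) 2) (hK : 0 < K)
    (φ : EuclideanSpace ℝ (Fin d) → ℝ)
    (hφ : ContDiff ℝ 2 φ) (hφc : HasCompactSupport φ) :
    let ρ : EuclideanSpace ℝ (Fin d) → ℝ :=
      fun x => Real.exp ((K + ‖x‖ ^ 2) ^ (ν₂ / 2))
    let A : EuclideanSpace ℝ (Fin d) → ℝ :=
      fun x => (1 / 2) * laplacian' (fun y => φ y * ρ y) x / ρ x
        - ν₂ ^ 2 * (K + ‖x‖ ^ 2) ^ (ν₂ - 1) * φ x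
    (∫ x, A x * φ x)
      ≤ -(1 / 2) * ∫ x, ∑ i : Fin d, (pderiv' φ x i) ^ 2
    ∧ (∫ x, A x * φ x) ≤ 0 :=
  operator_A_dissipative_general d ν₂ K hK φ hφ hφc
end
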